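/- arXiv:2310.09086 — 6 statements merged into one kernel-verified Lean document; each statement's English description precedes it below -/
import Mathlib

section
/- The number of Laplacian eigenvalues of the path graph P_n lying in the interval [0,1) equals ⌈n/3⌉. -/
open SimpleGraph Matrix Polynomial

/-- The Laplacian matrix of a simple graph over `ℝ`. -/
noncomputable def lapR {V : Type} [Fintype V] [DecidableEq V] (G : SimpleGraph V) :
    Matrix V V ℝ :=
  letI := Classical.decRel G.Adj
  G.lapMatrix ℝ

/-- The multiset of Laplacian eigenvalues of a graph, counted with multiplicity,
given as the roots of the characteristic polynomial of the Laplacian matrix. -/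
noncomputable def lapEigs {V : Type} [Fintype V] [DecidableEq V] (G : SimpleGraph V) :
    Multiset ℝ :=
  (lapR G).charpoly.roots

/-- `m_G[0,1)`: the number of Laplacian eigenvalues of `G` in `[0,1)`, with multiplicity. -/
noncomputable def mIco01 {V : Type} [Fintype V] [DecidableEq V] (G : SimpleGraph V) : ℕ :=
  letI : DecidablePred (fun x : ℝ => 0 ≤ x ∧ x < 1) := Classical.decPred _
  Multiset.card ((lapEigs G).filter (fun x => 0 ≤ x ∧ x < 1))

/-- `m_G(μ)`: the multiplicity of `μ` as a Laplacian eigenvalue of `G`. -/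
noncomputable def mEig {V : Type} [Fintype V] [DecidableEq V] (G : SimpleGraph V) (μ : ℝ) : ℕ :=
  Multiset.count μ (lapEigs G)

/-!
For `0 ≤ k < n` the vector `j ↦ cos ((2j+1)kπ/(2n))` is an eigenvector of the Laplacian of `P_n`
with eigenvalue `2 - 2 cos (kπ/n)`. These `n` eigenvalues are distinct, so they are all the roots of
the characteristic polynomial. Such an eigenvalue lies below `1` iff `cos (kπ/n) > 1/2 = cos (π/3)`,
i.e. iff `3k < n`, which happens for exactly `⌈n/3⌉` values of `k`.
-/

open Real

theorem Matrix.isRoot_charpoly_of_mulVec_eq_smul {R V : Type*} [CommRing R] [IsDomain R]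
    [Fintype V] [DecidableEq V] {A : Matrix V V R} {v : V → R} {μ : R}
    (hv : v ≠ 0) (hAv : A *ᵥ v = μ • v) : A.charpoly.IsRoot μ := by
  rw [← charpoly_toLin', ← Module.End.hasEigenvalue_iff_isRoot_charpoly]
  exact Module.End.hasEigenvalue_of_hasEigenvector
    ⟨Module.End.mem_eigenspace_iff.mpr (by simpa using hAv), hv⟩

theorem Polynomial.roots_eq_of_nodup_of_natDegree_le {R : Type*} [CommRing R] [IsDomain R]
    {p : R[X]} {s : Multiset R} (hp : p ≠ 0) (hs : s.Nodup) (hroots : ∀ a ∈ s, p.IsRoot a)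
    (hdeg : p.natDegree ≤ Multiset.card s) : p.roots = s :=
  (Multiset.eq_of_le_of_card_le ((Multiset.le_iff_subset hs).mpr fun a ha =>
    (mem_roots hp).mpr (hroots a ha)) ((card_roots' p).trans hdeg)).symm

/- Extending a vector on `Fin n` to `ℤ` evenly about `-1/2` and `n - 1/2` supplies the missing
neighbours of the two endpoints with zero differences, so every vertex looks like an interior
one. -/
theorem pathGraph_sum_neighborFinset_sub {R : Type*} [AddCommGroup R] {n : ℕ}
    [DecidableRel (pathGraph n).Adj] (f : ℤ → R) (h0 : f (-1) = f 0) (hn : f n = f (n - 1))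
    (i : Fin n) :
    ∑ u ∈ (pathGraph n).neighborFinset i, (f i - f u) = (f i - f (i - 1)) + (f i - f (i + 1)) := by
  have hne : (i : ℤ) - 1 ≠ i + 1 := by omega
  rw [← Finset.sum_pair (f := fun m : ℤ => f i - f m) hne]
  refine (Finset.sum_map _ (Fin.valEmbedding.trans Nat.castEmbedding)
    (fun m : ℤ => f i - f m)).symm.trans (Finset.sum_subset ?_ ?_)
  · intro m hm
    simp only [Finset.mem_map, mem_neighborFinset, pathGraph_adj] at hm
    obtain ⟨u, hu, rfl⟩ := hm
    simp only [Finset.mem_insert, Finset.mem_singleton, Function.Embedding.trans_apply,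
      Fin.valEmbedding_apply, Nat.castEmbedding_apply]
    omega
  · intro m hm hnot
    simp only [Finset.mem_map, mem_neighborFinset, pathGraph_adj, not_exists, not_and,
      Function.Embedding.trans_apply, Fin.valEmbedding_apply, Nat.castEmbedding_apply] at hnot
    simp only [Finset.mem_insert, Finset.mem_singleton] at hm
    rcases hm with rfl | rfl
    · obtain hi | hi := Nat.eq_zero_or_pos i
      · simp [hi, h0]
      · have := hnot ⟨i - 1, by omega⟩
        simp only at this
        omega
    · by_cases hi : (i : ℕ) + 1 = n
      · rw [show ((i : ℕ) : ℤ) = n - 1 by omega, sub_add_cancel, hn, sub_self]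
      · exact absurd (by push_cast; rfl) (hnot ⟨i + 1, by omega⟩ (Or.inl rfl))

theorem pathGraph_lapMatrix_mulVec_apply {R : Type*} [Ring R] {n : ℕ}
    [DecidableRel (pathGraph n).Adj] (f : ℤ → R) (h0 : f (-1) = f 0) (hn : f n = f (n - 1))
    (i : Fin n) :
    ((pathGraph n).lapMatrix R *ᵥ fun j => f j) i = 2 * f i - f (i - 1) - f (i + 1) := by
  have hsum := pathGraph_sum_neighborFinset_sub f h0 hn i
  rw [Finset.sum_sub_distrib, Finset.sum_const, nsmul_eq_mul] at hsum
  rw [lapMatrix_mulVec_apply, ← card_neighborFinset_eq_degree, hsum, two_mul]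
  abel

theorem Real.cos_sub_add_cos_add (x y : ℝ) : cos (x - y) + cos (x + y) = 2 * cos y * cos x := by
  rw [cos_sub, cos_add]
  ring

theorem pathGraph_lapMatrix_mulVec_cos {n : ℕ} [DecidableRel (pathGraph n).Adj] {θ : ℝ}
    (hθ : sin (2 * n * θ) = 0) :
    (pathGraph n).lapMatrix ℝ *ᵥ (fun j : Fin n => cos ((2 * j + 1) * θ)) =
      (2 - 2 * cos (2 * θ)) • fun j : Fin n => cos ((2 * j + 1) * θ) := by
  ext i
  have h := pathGraph_lapMatrix_mulVec_apply (fun j : ℤ => cos ((2 * j + 1) * θ)) ?_ ?_ i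
  · push_cast at h
    rw [h, Pi.smul_apply, smul_eq_mul, sub_mul, ← cos_sub_add_cos_add _ (2 * θ), sub_sub]
    congr 3 <;> ring
  · push_cast
    rw [show (2 * -1 + 1) * θ = -θ by ring, cos_neg, mul_zero, zero_add, one_mul]
  · push_cast
    rw [show (2 * n + 1) * θ = 2 * n * θ + θ by ring,
      show (2 * (n - 1) + 1) * θ = 2 * n * θ - θ by ring, cos_add, cos_sub, hθ]
    ring

noncomputable def pathLapEigenvalue (n k : ℕ) : ℝ := 2 - 2 * cos (k * π / n)

theorem natCast_mul_pi_div_mem_Icc {k n : ℕ} (hk : k ≤ n) : (k * π / n : ℝ) ∈ Set.Icc 0 π := by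
  rw [mul_div_right_comm]
  have hkn : (k / n : ℝ) ≤ 1 := div_le_one_of_le₀ (by exact_mod_cast hk) n.cast_nonneg
  exact ⟨by positivity, mul_le_of_le_one_left pi_pos.le hkn⟩

theorem pathLapEigenvalue_nonneg (n k : ℕ) : 0 ≤ pathLapEigenvalue n k := by
  unfold pathLapEigenvalue
  linarith [cos_le_one (k * π / n)]

theorem pathLapEigenvalue_injOn (n : ℕ) : Set.InjOn (pathLapEigenvalue n) (Set.Iio n) := by
  intro k hk l hl hkl
  have hn : (n : ℝ) ≠ 0 := Nat.cast_ne_zero.mpr (Nat.ne_zero_of_lt hk)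
  have hcos := injOn_cos (natCast_mul_pi_div_mem_Icc (le_of_lt hk))
    (natCast_mul_pi_div_mem_Icc (le_of_lt hl)) (by unfold pathLapEigenvalue at hkl; linarith)
  field_simp at hcos
  exact_mod_cast hcos

theorem pathLapEigenvalue_lt_one_iff {n k : ℕ} (hk : k < n) :
    pathLapEigenvalue n k < 1 ↔ 3 * k < n := by
  have hn : (0 : ℝ) < n := by exact_mod_cast k.zero_le.trans_lt hk
  have hthird : π / 3 ∈ Set.Icc 0 π := ⟨by positivity, by linarith [pi_pos]⟩
  rw [pathLapEigenvalue, show 2 - 2 * cos (k * π / n) < 1 ↔ cos (π / 3) < cos (k * π / n) by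
      rw [cos_pi_div_three]; constructor <;> intro h <;> linarith,
    strictAntiOn_cos.lt_iff_gt hthird (natCast_mul_pi_div_mem_Icc hk.le),
    div_lt_div_iff₀ hn (by norm_num), mul_right_comm, mul_comm π,
    mul_lt_mul_iff_of_pos_right pi_pos, mul_comm (k : ℝ)]
  exact_mod_cast Iff.rfl

theorem isRoot_charpoly_pathLapEigenvalue {n k : ℕ} [DecidableRel (pathGraph n).Adj]
    (hk : k < n) : ((pathGraph n).lapMatrix ℝ).charpoly.IsRoot (pathLapEigenvalue n k) := by
  have hn : (0 : ℝ) < n := by exact_mod_cast k.zero_le.trans_lt hk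
  set θ : ℝ := k * π / (2 * n) with hθ
  have h2θ : 2 * θ = k * π / n := by rw [hθ]; field_simp
  have hsin : sin (2 * n * θ) = 0 := by
    rw [show 2 * n * θ = k * π by rw [hθ]; field_simp, sin_nat_mul_pi]
  have hθ_lt : θ < π / 2 := by
    rw [hθ, div_lt_div_iff₀ (by positivity) two_pos]
    nlinarith [pi_pos, show (k : ℝ) < n by exact_mod_cast hk]
  have hcos : 0 < cos θ :=
    cos_pos_of_mem_Ioo ⟨by linarith [pi_pos, show 0 ≤ θ by positivity], hθ_lt⟩
  refine Matrix.isRoot_charpoly_of_mulVec_eq_smul (v := fun j : Fin n => cos ((2 * j + 1) * θ))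
    (fun h => hcos.ne' ?_) ?_
  · simpa using congrFun h ⟨0, k.zero_le.trans_lt hk⟩
  · rw [pathGraph_lapMatrix_mulVec_cos hsin, h2θ, pathLapEigenvalue]

theorem lapEigs_pathGraph (n : ℕ) :
    lapEigs (pathGraph n) = (Multiset.range n).map (pathLapEigenvalue n) := by
  classical
  unfold lapEigs lapR
  refine Polynomial.roots_eq_of_nodup_of_natDegree_le (charpoly_monic _).ne_zero
    ((Multiset.nodup_range n).map_on fun k hk l hl =>
      pathLapEigenvalue_injOn n (Multiset.mem_range.mp hk) (Multiset.mem_range.mp hl)) ?_ ?_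
  · simp only [Multiset.mem_map, Multiset.mem_range]
    rintro _ ⟨k, hk, rfl⟩
    exact isRoot_charpoly_pathLapEigenvalue hk
  · rw [charpoly_natDegree_eq_dim, Multiset.card_map, Multiset.card_range, Fintype.card_fin]

theorem mIco01_pathGraph (n : ℕ) : mIco01 (pathGraph n) = (n + 2) / 3 := by
  have hfilter : (Multiset.range n).filter (fun k => 3 * k < n) = Multiset.range ((n + 2) / 3) := by
    rw [← Finset.range_val, ← Finset.range_val, ← Finset.filter_val]
    congr 1
    ext k
    simp only [Finset.mem_filter, Finset.mem_range]
    omega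
  have hiff : ∀ k ∈ Multiset.range n,
      (0 ≤ pathLapEigenvalue n k ∧ pathLapEigenvalue n k < 1) ↔ 3 * k < n := by
    intro k hk
    have hk : k < n := Multiset.mem_range.mp hk
    exact ⟨fun h => (pathLapEigenvalue_lt_one_iff hk).mp h.2,
      fun h => ⟨pathLapEigenvalue_nonneg n k, (pathLapEigenvalue_lt_one_iff hk).mpr h⟩⟩
  rw [mIco01, lapEigs_pathGraph, Multiset.filter_map, Multiset.card_map,
    ← Multiset.card_range ((n + 2) / 3), ← hfilter]
  congr 1
  convert Multiset.filter_congr (p := (fun x : ℝ => 0 ≤ x ∧ x < 1) ∘ pathLapEigenvalue n) hiff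

/-- The number of Laplacian eigenvalues of the path graph `P_n` in `[0,1)` is `⌈n/3⌉`. -/
theorem path_count_eigenvalues_Ico (n : ℕ) :
    (mIco01 (pathGraph n) : ℤ) = ⌈(n : ℚ) / 3⌉ := by
  have hceil := Rat.ceil_natCast_div_natCast n 3
  push_cast at hceil
  rw [mIco01_pathGraph, hceil]
  omega
end

section
/- The number of Laplacian eigenvalues of the cycle graph C_n lying in the interval [0,1) equals 2⌈n/6⌉ - 1. -/
open SimpleGraph Matrix Polynomial

/-! The Laplacian of `C_n` is circulant: for every `n`-th root of unity `ζ`, the vector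
`j ↦ ζ ^ j` is an eigenvector with eigenvalue `2 - ζ - ζ⁻¹`. The roots `ζ = exp (2πik/n)` are
pairwise distinct, so these vectors form an invertible (Vandermonde) matrix and the characteristic
polynomial is `∏ₖ (X - (2 - 2 cos (2πk/n)))`. Such an eigenvalue lies in `[0,1)` iff
`cos (2πk/n) > 1/2`, i.e. iff `6k < n` or `5n < 6k`; there are `⌈n/6⌉` indices of the first kind
and `⌈n/6⌉ - 1` of the second. -/

open Real Finset
open scoped Complex

namespace Matrix

variable {n R : Type*} [Fintype n] [DecidableEq n] [CommRing R]

theorem charpoly_eq_of_mul_eq_mul {A P D : Matrix n n R} (hP : IsUnit P.det)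
    (h : A * P = P * D) : A.charpoly = D.charpoly := by
  have hD : D = P⁻¹ * A * P := by rw [mul_assoc, h, ← mul_assoc, nonsing_inv_mul P hP, one_mul]
  obtain ⟨u, rfl⟩ := (isUnit_iff_isUnit_det P).mpr hP
  rw [hD, charpoly_units_conj']

theorem mul_eq_mul_diagonal_of_mulVec_eq {A P : Matrix n n R} {d : n → R}
    (h : ∀ k, A *ᵥ (fun j => P j k) = d k • fun j => P j k) : A * P = P * diagonal d := by
  ext j k
  rw [mul_diagonal]
  simpa [mulVec, dotProduct, mul_apply, mul_comm] using congrFun (h k) j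

theorem charpoly_eq_prod_of_mulVec_eq {A P : Matrix n n R} {d : n → R} (hP : IsUnit P.det)
    (h : ∀ k, A *ᵥ (fun j => P j k) = d k • fun j => P j k) :
    A.charpoly = ∏ k, (X - C (d k)) := by
  rw [charpoly_eq_of_mul_eq_mul hP (mul_eq_mul_diagonal_of_mulVec_eq h), charpoly_diagonal]

end Matrix

theorem SimpleGraph.lapMatrix_map {V R S : Type*} [Fintype V] [DecidableEq V]
    (G : SimpleGraph V) [DecidableRel G.Adj] [Ring R] [Ring S] (f : R →+* S) :
    (G.lapMatrix R).map f = G.lapMatrix S := by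
  ext i j
  by_cases h : i = j <;> by_cases h' : G.Adj i j <;>
    simp [lapMatrix, degMatrix, adjMatrix_apply, h, h']

theorem Fin.pow_val_add_one {M : Type*} [Monoid M] {n : ℕ} [NeZero n] {ζ : M} (hζ : ζ ^ n = 1)
    (j : Fin n) : ζ ^ ((j + 1 : Fin n) : ℕ) = ζ ^ (j : ℕ) * ζ := by
  rw [← pow_succ, pow_eq_pow_mod ((j : ℕ) + 1) hζ, Fin.val_add, Fin.val_one', Nat.add_mod_mod]

theorem cycleGraph_lapMatrix_mulVec_pow {K : Type*} [Field K] {n : ℕ} (hn : 3 ≤ n) {ζ : K}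
    (hζ : ζ ^ n = 1) :
    (cycleGraph n).lapMatrix K *ᵥ (fun j : Fin n => ζ ^ (j : ℕ)) =
      (2 - ζ - ζ⁻¹) • fun j : Fin n => ζ ^ (j : ℕ) := by
  obtain ⟨m, rfl⟩ : ∃ m, n = m + 3 := ⟨n - 3, by omega⟩
  have hζ0 : ζ ≠ 0 := by rintro rfl; simp at hζ
  ext j
  have hsucc := Fin.pow_val_add_one hζ j
  have hpred : ζ ^ ((j - 1 : Fin (m + 3)) : ℕ) = ζ ^ (j : ℕ) * ζ⁻¹ := by
    rw [eq_mul_inv_iff_mul_eq₀ hζ0, ← Fin.pow_val_add_one hζ, sub_add_cancel]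
  have hne : j - 1 ≠ j + 1 := by
    rw [Ne, sub_eq_iff_eq_add, add_assoc, left_eq_add, Fin.ext_iff]
    simp [Fin.val_add, Nat.mod_eq_of_lt (show 2 < m + 3 by omega)]
  rw [lapMatrix_mulVec_apply, cycleGraph_neighborFinset, cycleGraph_degree_three_le,
    sum_pair hne, hsucc, hpred, Pi.smul_apply, smul_eq_mul]
  push_cast
  ring

theorem Complex.exp_two_pi_I_div_pow_add_inv (n k : ℕ) :
    cexp (2 * π * I / n) ^ k + (cexp (2 * π * I / n) ^ k)⁻¹ =
      (2 * Real.cos (2 * π * k / n) : ℝ) := by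
  rw [← exp_nat_mul, ← exp_neg]
  push_cast
  rw [two_cos]
  congr 2 <;> ring

theorem cycleGraph_lapMatrix_charpoly_complex {n : ℕ} (hn : 3 ≤ n) :
    ((cycleGraph n).lapMatrix ℂ).charpoly =
      ∏ k : Fin n, (X - C ((2 - 2 * Real.cos (2 * π * k / n) : ℝ) : ℂ)) := by
  set ω := cexp (2 * π * Complex.I / n)
  have hω : IsPrimitiveRoot ω n := Complex.isPrimitiveRoot_exp n (by omega)
  apply charpoly_eq_prod_of_mulVec_eq (P := (vandermonde fun k : Fin n => ω ^ (k : ℕ))ᵀ)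
  · rw [det_transpose, isUnit_iff_ne_zero, det_vandermonde_ne_zero_iff]
    exact fun i j h => Fin.ext (hω.pow_inj i.isLt j.isLt h)
  · intro k
    have hζ : (ω ^ (k : ℕ)) ^ n = 1 := by
      rw [← pow_mul, mul_comm, pow_mul, hω.pow_eq_one, one_pow]
    simp only [transpose_apply, vandermonde_apply]
    rw [cycleGraph_lapMatrix_mulVec_pow hn hζ, sub_sub, Complex.exp_two_pi_I_div_pow_add_inv]
    push_cast
    rfl

theorem cycleGraph_lapMatrix_charpoly {n : ℕ} (hn : 3 ≤ n) :
    ((cycleGraph n).lapMatrix ℝ).charpoly =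
      ∏ k : Fin n, (X - C (2 - 2 * Real.cos (2 * π * k / n))) := by
  apply map_injective (algebraMap ℝ ℂ) (algebraMap ℝ ℂ).injective
  rw [← charpoly_map, lapMatrix_map, cycleGraph_lapMatrix_charpoly_complex hn, Polynomial.map_prod]
  simp

theorem lapR_eq_lapMatrix {V : Type} [Fintype V] [DecidableEq V] (G : SimpleGraph V)
    [DecidableRel G.Adj] : lapR G = G.lapMatrix ℝ := by
  unfold lapR
  congr!

theorem mIco01_eq_card_filter {V ι : Type} [Fintype V] [DecidableEq V] [Fintype ι]
    {G : SimpleGraph V} {f : ι → ℝ} (h : lapEigs G = univ.val.map f) :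
    mIco01 G = #{i | 0 ≤ f i ∧ f i < 1} := by
  rw [mIco01, h, Multiset.filter_map, Multiset.card_map, card_def, filter_val]
  congr!

theorem lapEigs_cycleGraph {n : ℕ} (hn : 3 ≤ n) :
    lapEigs (cycleGraph n) = univ.val.map fun k : Fin n => 2 - 2 * cos (2 * π * k / n) := by
  rw [lapEigs, lapR_eq_lapMatrix, cycleGraph_lapMatrix_charpoly hn,
    roots_prod _ _ (prod_ne_zero_iff.mpr fun k _ => X_sub_C_ne_zero _)]
  simp only [roots_X_sub_C, Multiset.bind_singleton]

theorem Real.half_lt_cos_iff {x : ℝ} (h0 : 0 ≤ x) (h2π : x ≤ 2 * π) :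
    1 / 2 < cos x ↔ x < π / 3 ∨ 5 * π / 3 < x := by
  have hπ := pi_pos
  have hπ3 : π / 3 ∈ Set.Icc 0 π := ⟨by positivity, by linarith⟩
  rw [← cos_pi_div_three]
  rcases le_total x π with hx | hx
  · rw [strictAntiOn_cos.lt_iff_gt hπ3 ⟨h0, hx⟩]
    constructor
    · exact Or.inl
    · rintro (h | h) <;> linarith
  · rw [← cos_two_pi_sub x, strictAntiOn_cos.lt_iff_gt hπ3 ⟨by linarith, by linarith⟩]
    constructor
    · intro h; right; linarith
    · rintro (h | h) <;> linarith

theorem two_sub_two_cos_mem_Ico_iff {n k : ℕ} (hk : k < n) :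
    (0 ≤ 2 - 2 * cos (2 * π * k / n) ∧ 2 - 2 * cos (2 * π * k / n) < 1) ↔
      6 * k < n ∨ 5 * n < 6 * k := by
  have hπ := pi_pos
  have hn : (0 : ℝ) < n := by exact_mod_cast k.zero_le.trans_lt hk
  have hkn : (k : ℝ) ≤ n := by exact_mod_cast hk.le
  have hx2π : 2 * π * k / n ≤ 2 * π := by
    rw [div_le_iff₀ hn]
    nlinarith
  have hlow : 2 * π * k / n < π / 3 ↔ 6 * k < n := by
    rw [div_lt_div_iff₀ hn three_pos, ← Nat.cast_lt (α := ℝ)]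
    push_cast
    constructor <;> intro h <;> nlinarith
  have hhigh : 5 * π / 3 < 2 * π * k / n ↔ 5 * n < 6 * k := by
    rw [div_lt_div_iff₀ three_pos hn, ← Nat.cast_lt (α := ℝ)]
    push_cast
    constructor <;> intro h <;> nlinarith
  have hcos := cos_le_one (2 * π * k / n)
  rw [← hlow, ← hhigh, ← half_lt_cos_iff (by positivity) hx2π]
  constructor
  · rintro ⟨-, h⟩
    linarith
  · intro h
    constructor <;> linarith

theorem card_filter_six_mul_lt_or_lt {n : ℕ} (hn : 0 < n) :
    (#{k : Fin n | 6 * (k : ℕ) < n ∨ 5 * n < 6 * (k : ℕ)} : ℤ) = 2 * ⌈(n : ℚ) / 6⌉ - 1 := by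
  have hlow : #{k : Fin n | 6 * (k : ℕ) < n} = (n + 5) / 6 := by
    rw [← min_eq_right (show (n + 5) / 6 ≤ n by omega), ← Fin.card_filter_val_lt]
    congr! 2 with k
    omega
  have hhigh : #{k : Fin n | 5 * n < 6 * (k : ℕ)} = n - (5 * n / 6 + 1) := by
    have hsplit :=
      card_filter_add_card_filter_not (s := univ) fun k : Fin n => (k : ℕ) < 5 * n / 6 + 1
    rw [Fin.card_filter_val_lt, min_eq_right (by omega), card_univ, Fintype.card_fin] at hsplit
    have hcongr : #{k : Fin n | 5 * n < 6 * (k : ℕ)} =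
        #{k : Fin n | ¬(k : ℕ) < 5 * n / 6 + 1} := by
      congr! 2 with k
      omega
    omega
  have hceil := Rat.ceil_natCast_div_natCast n 6
  push_cast at hceil
  rw [filter_or, card_union_of_disjoint (disjoint_filter.mpr fun k _ h => by omega), Nat.cast_add,
    hlow, hhigh, hceil]
  omega

/-- The number of Laplacian eigenvalues of the cycle graph `C_n` in `[0,1)` is `2⌈n/6⌉ - 1`. -/
theorem cycle_count_eigenvalues_Ico (n : ℕ) (hn : 3 ≤ n) :
    (mIco01 (cycleGraph n) : ℤ) = 2 * ⌈(n : ℚ) / 6⌉ - 1 := by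
  rw [mIco01_eq_card_filter (lapEigs_cycleGraph hn), ← card_filter_six_mul_lt_or_lt (by omega)]
  congr! 3 with k
  exact two_sub_two_cos_mem_Ico_iff k.isLt
end

section
/- Let G be a graph on n vertices and let G' be obtained from G by deleting a pendant vertex (a vertex of degree 1). If the number of Laplacian eigenvalues of G' in [0,1) is at least k, then the number of Laplacian eigenvalues of G in [0,1) is at least k. -/
open SimpleGraph Matrix Polynomial

/-!
Let `w` be the unique neighbour of `v` and `G' = G - v`. The number of eigenvalues of a real
symmetric matrix `A` below `c` is the largest dimension of a subspace on which `xᵀAx < c xᵀx`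
(expand `x` in an orthonormal eigenbasis). Extending a vector on `V ∖ {v}` to `V` by copying its
`w`-coordinate to `v` leaves the Laplacian form unchanged, since the only edge at `v` then
contributes `(x v - x w)² = 0`, and it can only increase `xᵀx`. So this injective extension maps
a witness subspace for `G'` to one for `G`, for every threshold `c ≥ 0`.
-/

open Finset Module

namespace Matrix

variable {n : Type*} [Fintype n]

def RayleighLtOn (A : Matrix n n ℝ) (c : ℝ) (W : Submodule ℝ (n → ℝ)) : Prop :=
  ∀ x ∈ W, x ≠ 0 → x ⬝ᵥ A *ᵥ x < c * (x ⬝ᵥ x)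

lemma mul_dotProduct_self_le_sum_mul_sq {d y : n → ℝ} {c : ℝ}
    (hy : ∀ i, d i < c → y i = 0) :
    c * (y ⬝ᵥ y) ≤ ∑ i, d i * y i ^ 2 := by
  rw [dotProduct, Finset.mul_sum]
  refine Finset.sum_le_sum fun i _ => ?_
  rcases lt_or_ge (d i) c with hi | hi
  · simp [hy i hi]
  · nlinarith [sq_nonneg (y i)]

lemma sum_mul_sq_lt_mul_dotProduct_self {d y : n → ℝ} {c : ℝ}
    (hy : ∀ i, c ≤ d i → y i = 0) (hy0 : y ≠ 0) :
    ∑ i, d i * y i ^ 2 < c * (y ⬝ᵥ y) := by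
  obtain ⟨j, hj⟩ : ∃ j, y j ≠ 0 := Function.ne_iff.mp hy0
  rw [dotProduct, Finset.mul_sum]
  refine Finset.sum_lt_sum (fun i _ => ?_) ⟨j, Finset.mem_univ j, ?_⟩
  · rcases lt_or_ge (d i) c with hi | hi
    · nlinarith [sq_nonneg (y i)]
    · simp [hy i hi]
  · have hdj : d j < c := not_le.mp fun h => hj (hy j h)
    have : 0 < y j ^ 2 := by positivity
    nlinarith

namespace IsHermitian

variable [DecidableEq n] {A : Matrix n n ℝ} (hA : A.IsHermitian)

noncomputable def eigenCoord : (n → ℝ) ≃ₗ[ℝ] (n → ℝ) :=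
  (WithLp.linearEquiv 2 ℝ (n → ℝ)).symm ≪≫ₗ
    hA.eigenvectorBasis.repr.toLinearEquiv ≪≫ₗ WithLp.linearEquiv 2 ℝ (n → ℝ)

lemma eigenCoord_apply (x : n → ℝ) (i : n) :
    hA.eigenCoord x i = ⇑(hA.eigenvectorBasis i) ⬝ᵥ x := by
  simp [eigenCoord, OrthonormalBasis.repr_apply_apply, EuclideanSpace.inner_eq_star_dotProduct,
    dotProduct_comm]

lemma dotProduct_self_eigenCoord (x : n → ℝ) :
    hA.eigenCoord x ⬝ᵥ hA.eigenCoord x = x ⬝ᵥ x := by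
  have h := hA.eigenvectorBasis.repr.inner_map_map (WithLp.toLp 2 x) (WithLp.toLp 2 x)
  simp only [EuclideanSpace.inner_eq_star_dotProduct, star_trivial] at h
  simpa [eigenCoord] using h

lemma dotProduct_mulVec_eq_sum (x : n → ℝ) :
    x ⬝ᵥ A *ᵥ x = ∑ i, hA.eigenvalues i * hA.eigenCoord x i ^ 2 := by
  have h := hA.eigenvectorBasis.sum_inner_mul_inner (WithLp.toLp 2 x) (WithLp.toLp 2 (A *ᵥ x))
  simp only [EuclideanSpace.inner_eq_star_dotProduct, star_trivial] at h
  have hcoord (i : n) :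
      A *ᵥ x ⬝ᵥ ⇑(hA.eigenvectorBasis i) = hA.eigenvalues i * hA.eigenCoord x i := by
    rw [dotProduct_comm, dotProduct_mulVec, ← mulVec_transpose, (isHermitian_iff_isSymm.mp hA).eq,
      hA.mulVec_eigenvectorBasis, smul_dotProduct, smul_eq_mul, eigenCoord_apply]
  rw [dotProduct_comm, ← h]
  refine Finset.sum_congr rfl fun i _ => ?_
  rw [hcoord, ← eigenCoord_apply]
  ring

theorem finrank_le_card_eigenvalues_lt {c : ℝ} {W : Submodule ℝ (n → ℝ)}
    (hW : A.RayleighLtOn c W) :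
    finrank ℝ W ≤ #{i | hA.eigenvalues i < c} := by
  let ψ : W →ₗ[ℝ] {i // hA.eigenvalues i < c} → ℝ :=
    LinearMap.funLeft ℝ ℝ Subtype.val ∘ₗ hA.eigenCoord.toLinearMap ∘ₗ W.subtype
  have hψ : Function.Injective ψ := by
    refine (injective_iff_map_eq_zero ψ).mpr fun x hx => ?_
    by_contra hx0
    have hvanish : ∀ i, hA.eigenvalues i < c → hA.eigenCoord x i = 0 :=
      fun i hi => congr_fun hx ⟨i, hi⟩
    have hlt := hW x x.2 (by simpa using hx0)
    rw [hA.dotProduct_mulVec_eq_sum, ← hA.dotProduct_self_eigenCoord] at hlt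
    exact hlt.not_ge (mul_dotProduct_self_le_sum_mul_sq hvanish)
  simpa [Fintype.card_subtype] using LinearMap.finrank_le_finrank_of_injective hψ

theorem exists_rayleighLtOn_finrank_eq (c : ℝ) :
    ∃ W : Submodule ℝ (n → ℝ),
      finrank ℝ W = #{i | hA.eigenvalues i < c} ∧ A.RayleighLtOn c W := by
  let χ := hA.eigenCoord.symm.toLinearMap ∘ₗ
    Function.ExtendByZero.linearMap ℝ (Subtype.val : {i // hA.eigenvalues i < c} → n)
  have hχ : Function.Injective χ := by
    refine hA.eigenCoord.symm.injective.comp fun a b hab => funext fun i => ?_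
    have := congr_fun hab i
    rwa [Function.ExtendByZero.linearMap_apply, Function.ExtendByZero.linearMap_apply,
      Subtype.val_injective.extend_apply, Subtype.val_injective.extend_apply] at this
  refine ⟨LinearMap.range χ,
    by simp [LinearMap.finrank_range_of_inj hχ, Fintype.card_subtype], ?_⟩
  rintro _ ⟨a, rfl⟩ hx0
  rw [hA.dotProduct_mulVec_eq_sum, ← hA.dotProduct_self_eigenCoord]
  refine sum_mul_sq_lt_mul_dotProduct_self (fun i hi => ?_)
    (hA.eigenCoord.map_ne_zero_iff.mpr hx0)
  simp only [χ, LinearMap.coe_comp, LinearEquiv.coe_coe, Function.comp_apply,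
    LinearEquiv.apply_symm_apply, Function.ExtendByZero.linearMap_apply]
  exact Function.extend_apply' _ _ _ fun ⟨j, hj⟩ => (hj ▸ j.2).not_ge hi

end IsHermitian
end Matrix

namespace SimpleGraph

variable {V : Type} [Fintype V] [DecidableEq V] {G : SimpleGraph V}

lemma lapR_eq_lapMatrix (G : SimpleGraph V) [DecidableRel G.Adj] : lapR G = G.lapMatrix ℝ := by
  unfold lapR
  congr!

lemma dotProduct_lapR_mulVec (G : SimpleGraph V) [DecidableRel G.Adj] (x : V → ℝ) :
    x ⬝ᵥ lapR G *ᵥ x = (∑ i, ∑ j, if G.Adj i j then (x i - x j) ^ 2 else 0) / 2 := by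
  rw [lapR_eq_lapMatrix, ← toLinearMap₂'_apply', lapMatrix_toLinearMap₂']

lemma dotProduct_lapR_mulVec_eq_induce_of_pendant {v w : V} (hv : ∀ u, G.Adj v u ↔ u = w)
    {x : V → ℝ} (hx : x v = x w) :
    x ⬝ᵥ lapR G *ᵥ x =
      (x ∘ Subtype.val) ⬝ᵥ lapR (G.induce {a | a ≠ v}) *ᵥ (x ∘ Subtype.val) := by
  classical
  have hrow (j : V) : (if G.Adj v j then (x v - x j) ^ 2 else 0) = 0 := by
    split_ifs with h
    · rw [(hv j).mp h, hx, sub_self, sq, mul_zero]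
    · rfl
  have hcol (i : V) : (if G.Adj i v then (x i - x v) ^ 2 else 0) = 0 := by
    rw [← neg_sub, neg_sq, if_congr (G.adj_comm i v) rfl rfl]
    exact hrow i
  rw [dotProduct_lapR_mulVec, dotProduct_lapR_mulVec, Fintype.sum_eq_add_sum_subtype_ne _ v]
  simp only [hrow, Finset.sum_const_zero, zero_add]
  congr 1
  refine Finset.sum_congr rfl fun i _ => ?_
  rw [Fintype.sum_eq_add_sum_subtype_ne _ v, hcol, zero_add]
  rfl

lemma posSemidef_lapR (G : SimpleGraph V) : (lapR G).PosSemidef := by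
  classical
  rw [lapR_eq_lapMatrix]
  exact posSemidef_lapMatrix ℝ G

lemma isHermitian_lapR (G : SimpleGraph V) : (lapR G).IsHermitian :=
  (posSemidef_lapR G).isHermitian

lemma lapEigs_eq_map_eigenvalues (G : SimpleGraph V) :
    lapEigs G = univ.val.map (isHermitian_lapR G).eigenvalues := by
  rw [lapEigs]
  simpa using (isHermitian_lapR G).roots_charpoly_eq_eigenvalues

lemma mIco01_eq_card_eigenvalues_lt_one (G : SimpleGraph V) :
    mIco01 G = #{i | (isHermitian_lapR G).eigenvalues i < 1} := by
  simp only [mIco01, lapEigs_eq_map_eigenvalues, Multiset.filter_map, Multiset.card_map, card_def]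
  -- `mIco01` filters with a classical decidability instance, hence the instance holes
  exact congrArg _ <| @Multiset.filter_congr _ _ _ (_) (_) _ fun i _ => by
    simp [(posSemidef_lapR G).eigenvalues_nonneg i]

theorem card_eigenvalues_lt_induce_le_of_pendant {v : V} (hv : ∃! w, G.Adj v w) {c : ℝ}
    (hc : 0 ≤ c) :
    #{i | (isHermitian_lapR (G.induce {a | a ≠ v})).eigenvalues i < c} ≤
      #{i | (isHermitian_lapR G).eigenvalues i < c} := by
  obtain ⟨w, hw, huniq⟩ := hv
  have hwv : w ≠ v := (G.ne_of_adj hw).symm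
  let r : V → {a | a ≠ v} := fun a => if h : a = v then ⟨w, hwv⟩ else ⟨a, h⟩
  have hr : Function.Surjective r := fun a => ⟨a, dif_neg a.2⟩
  obtain ⟨W', hdim, hW'⟩ :=
    (isHermitian_lapR (G.induce {a | a ≠ v})).exists_rayleighLtOn_finrank_eq c
  rw [← hdim, (Submodule.equivMapOfInjective _
    (LinearMap.funLeft_injective_of_surjective _ _ r hr) W').finrank_eq]
  refine (isHermitian_lapR G).finrank_le_card_eigenvalues_lt ?_
  rintro _ ⟨x, hx, rfl⟩ hx0
  have hx0' : x ≠ 0 := by rintro rfl; exact hx0 (map_zero _)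
  have hrestrict : (x ∘ r) ∘ Subtype.val = x := funext fun a => by
    simp only [Function.comp_apply, r, dif_neg (a.2 : (a : V) ≠ v)]
  have hnorm : x ⬝ᵥ x ≤ (x ∘ r) ⬝ᵥ (x ∘ r) := by
    rw [dotProduct, dotProduct, Fintype.sum_eq_add_sum_subtype_ne _ v]
    conv_lhs => rw [← hrestrict]
    exact le_add_of_nonneg_left (mul_self_nonneg _)
  change (x ∘ r) ⬝ᵥ lapR G *ᵥ (x ∘ r) < c * ((x ∘ r) ⬝ᵥ (x ∘ r))
  calc (x ∘ r) ⬝ᵥ lapR G *ᵥ (x ∘ r) = x ⬝ᵥ lapR (G.induce {a | a ≠ v}) *ᵥ x := by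
        rw [dotProduct_lapR_mulVec_eq_induce_of_pendant (fun u => ⟨huniq u, fun h => h ▸ hw⟩)
          (by simp [r, hwv]), hrestrict]
    _ < c * (x ⬝ᵥ x) := hW' x hx hx0'
    _ ≤ c * ((x ∘ r) ⬝ᵥ (x ∘ r)) := by gcongr

end SimpleGraph

/-- Deleting a pendant vertex (a vertex with exactly one neighbour): if the graph `G'`
obtained from `G` by deleting a pendant vertex `v` has at least `k` Laplacian eigenvalues
in `[0,1)`, then so does `G`. -/
theorem pendant_deletion_Ico {V : Type} [Fintype V] [DecidableEq V] (G : SimpleGraph V)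
    (v : V) (hv : ∃! w : V, G.Adj v w) (k : ℕ)
    (h : k ≤ mIco01 (G.induce {w : V | w ≠ v})) :
    k ≤ mIco01 G := by
  rw [mIco01_eq_card_eigenvalues_lt_one] at h ⊢
  exact h.trans (card_eigenvalues_lt_induce_le_of_pendant hv zero_le_one)
end

section
/- Let A and B be n×n Hermitian matrices, and let i, j satisfy 1 ≤ i + j - n ≤ n. Then μ_{i+j-n}(A + B) ≤ μ_i(A) + μ_j(B), where μ_k denotes the k-th smallest eigenvalue. Moreover, equality holds if and only if there exists a unit vector x with A x = μ_i(A) x, B x = μ_j(B) x, and (A+B)x = μ_{i+j-n}(A+B) x. -/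
open Matrix

/-- `μ_k(A)`: the `k`-th smallest eigenvalue (indexed from `1`) of a Hermitian matrix `A`. -/
noncomputable def muH {n : ℕ} {A : Matrix (Fin n) (Fin n) ℂ} (hA : A.IsHermitian) (k : ℕ) :
    ℝ :=
  ((Multiset.map hA.eigenvalues (Finset.univ : Finset (Fin n)).val).sort (· ≤ ·)).getD (k - 1) 0

/-!
Write `a = μ_i(A)`, `b = μ_j(B)`, `c = μ_k(A + B)` with `k = i + j - n`. Eigenvectors of `A` with
eigenvalue `≤ a` span a subspace of dimension `≥ i`, those of `B` with eigenvalue `≤ b` one of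
dimension `≥ j`, and those of `A + B` with eigenvalue `≥ c` one of dimension `≥ n - k + 1`. Since
`i + j + (n - k + 1) > 2n`, the three subspaces share a unit vector `x`, and comparing Rayleigh
quotients gives `c ≤ ⟪x, (A + B) x⟫ = ⟪x, A x⟫ + ⟪x, B x⟫ ≤ a + b`. In the case of equality each
Rayleigh quotient is extremal on its subspace, which forces `x` to be an eigenvector of all three.
-/

open Finset Module Submodule
open scoped InnerProductSpace

namespace Tuple

variable {n : ℕ} {α : Type*} [LinearOrder α] (f : Fin n → α)

theorem sort_univ_map_eq_ofFn : (univ.val.map f).sort (· ≤ ·) = List.ofFn (f ∘ sort f) := by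
  refine List.Perm.eq_of_sortedLE (Multiset.pairwise_sort ..).sortedLE
    (monotone_sort f).sortedLE_ofFn ?_
  rw [← Multiset.coe_eq_coe, Multiset.sort_eq, Fin.univ_val_map, Multiset.coe_eq_coe]
  exact ((sort f).ofFn_comp_perm f).symm

theorem le_card_filter_le_apply_sort (p : Fin n) : (p : ℕ) + 1 ≤ #{l | f l ≤ f (sort f p)} := by
  rw [← Fin.card_Iic]
  refine card_le_card_of_injOn (sort f) (fun q hq => ?_) (sort f).injective.injOn
  simpa using monotone_sort f (mem_Iic.1 hq)

theorem le_card_filter_apply_sort_le (p : Fin n) : n - p ≤ #{l | f (sort f p) ≤ f l} := by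
  rw [← Fin.card_Ici]
  refine card_le_card_of_injOn (sort f) (fun q hq => ?_) (sort f).injective.injOn
  simpa using monotone_sort f (mem_Ici.1 hq)

end Tuple

theorem Submodule.inf_inf_ne_bot_of_lt_finrank_add {K V : Type*} [DivisionRing K]
    [AddCommGroup V] [Module K V] [FiniteDimensional K V] (S T U : Submodule K V)
    (h : 2 * finrank K V < finrank K S + finrank K T + finrank K U) : S ⊓ T ⊓ U ≠ ⊥ := by
  intro hbot
  have hST := finrank_sup_add_finrank_inf_eq S T
  have hSTU := finrank_sup_add_finrank_inf_eq (S ⊓ T) U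
  rw [hbot, finrank_bot] at hSTU
  have := (S ⊔ T).finrank_le
  have := (S ⊓ T ⊔ U).finrank_le
  omega

theorem Submodule.exists_norm_eq_one_mem {𝕜 E : Type*} [RCLike 𝕜] [NormedAddCommGroup E]
    [NormedSpace 𝕜 E] {S : Submodule 𝕜 E} (hS : S ≠ ⊥) : ∃ x ∈ S, ‖x‖ = 1 := by
  obtain ⟨x, hx, hx0⟩ := S.ne_bot_iff.1 hS
  exact ⟨(‖x‖⁻¹ : 𝕜) • x, S.smul_mem _ hx, norm_smul_inv_norm hx0⟩

namespace OrthonormalBasis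

variable {𝕜 E ι : Type*} [RCLike 𝕜] [NormedAddCommGroup E] [InnerProductSpace 𝕜 E] [Fintype ι]
  (b : OrthonormalBasis ι 𝕜 E)

theorem finrank_span_image (s : Set ι) [Fintype s] :
    finrank 𝕜 (span 𝕜 (b '' s)) = Fintype.card s := by
  rw [Set.image_eq_range, ← finrank_span_eq_card
    (b.orthonormal.linearIndependent.comp _ Subtype.val_injective)]
  rfl

theorem inner_eq_zero_of_mem_span_image {s : Set ι} {x : E} (hx : x ∈ span 𝕜 (b '' s))
    {l : ι} (hl : l ∉ s) : ⟪b l, x⟫_𝕜 = 0 := by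
  have := b.toBasis.repr_support_subset_of_mem_span s (by simpa using hx)
  by_contra h
  exact hl (this (by simpa [b.repr_apply_apply] using h))

variable {T : E →ₗ[𝕜] E} {d : ι → ℝ} {c : ℝ} {x : E}

theorem inner_apply_of_apply_eq (hb : ∀ l, T (b l) = (d l : 𝕜) • b l) (x : E) (l : ι) :
    ⟪b l, T x⟫_𝕜 = d l * ⟪b l, x⟫_𝕜 := by
  classical
  conv_lhs => rw [← b.sum_repr' x]
  simp [hb, inner_sum, inner_smul_right, b.inner_eq_ite, mul_comm]

theorem re_inner_apply_eq_sum (hb : ∀ l, T (b l) = (d l : 𝕜) • b l) (x : E) :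
    RCLike.re ⟪x, T x⟫_𝕜 = ∑ l, d l * ‖⟪b l, x⟫_𝕜‖ ^ 2 := by
  rw [← b.sum_inner_mul_inner, map_sum]
  refine sum_congr rfl fun l _ => ?_
  rw [b.inner_apply_of_apply_eq hb, ← inner_conj_symm, mul_left_comm, RCLike.conj_mul]
  norm_cast

theorem mul_sq_norm_inner_le_of_mem_span (hx : x ∈ span 𝕜 (b '' {l | d l ≤ c})) (l : ι) :
    d l * ‖⟪b l, x⟫_𝕜‖ ^ 2 ≤ c * ‖⟪b l, x⟫_𝕜‖ ^ 2 := by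
  by_cases hl : d l ≤ c
  · gcongr
  · simp [b.inner_eq_zero_of_mem_span_image hx hl]

theorem re_inner_apply_le_of_mem_span (hb : ∀ l, T (b l) = (d l : 𝕜) • b l)
    (hx : x ∈ span 𝕜 (b '' {l | d l ≤ c})) : RCLike.re ⟪x, T x⟫_𝕜 ≤ c * ‖x‖ ^ 2 := by
  rw [b.re_inner_apply_eq_sum hb, ← b.sum_sq_norm_inner_right, mul_sum]
  exact sum_le_sum fun l _ => b.mul_sq_norm_inner_le_of_mem_span hx l

theorem apply_eq_smul_of_mem_span_le (hb : ∀ l, T (b l) = (d l : 𝕜) • b l)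
    (hx : x ∈ span 𝕜 (b '' {l | d l ≤ c})) (h : RCLike.re ⟪x, T x⟫_𝕜 = c * ‖x‖ ^ 2) :
    T x = (c : 𝕜) • x := by
  rw [b.re_inner_apply_eq_sum hb, ← b.sum_sq_norm_inner_right, mul_sum] at h
  have hterm := (sum_eq_sum_iff_of_le fun l _ => b.mul_sq_norm_inner_le_of_mem_span hx l).1 h
  refine InnerProductSpace.ext_inner_left_basis b.toBasis fun l => ?_
  rw [b.coe_toBasis, b.inner_apply_of_apply_eq hb, inner_smul_right]
  rcases eq_or_ne ⟪b l, x⟫_𝕜 0 with h0 | h0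
  · simp [h0]
  · rw [mul_right_cancel₀ (by positivity) (hterm l (mem_univ l))]

theorem le_re_inner_apply_of_mem_span (hb : ∀ l, T (b l) = (d l : 𝕜) • b l)
    (hx : x ∈ span 𝕜 (b '' {l | c ≤ d l})) : c * ‖x‖ ^ 2 ≤ RCLike.re ⟪x, T x⟫_𝕜 := by
  have hb' : ∀ l, (-T) (b l) = ((-d l : ℝ) : 𝕜) • b l := by simp [hb]
  have := b.re_inner_apply_le_of_mem_span hb' (c := -c) (by simpa using hx)
  simp only [LinearMap.neg_apply, inner_neg_right, map_neg] at this
  linarith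

theorem apply_eq_smul_of_mem_span_ge (hb : ∀ l, T (b l) = (d l : 𝕜) • b l)
    (hx : x ∈ span 𝕜 (b '' {l | c ≤ d l})) (h : RCLike.re ⟪x, T x⟫_𝕜 = c * ‖x‖ ^ 2) :
    T x = (c : 𝕜) • x := by
  have hb' : ∀ l, (-T) (b l) = ((-d l : ℝ) : 𝕜) • b l := by simp [hb]
  have := b.apply_eq_smul_of_mem_span_le hb' (c := -c) (by simpa using hx)
    (by simp [inner_neg_right, h])
  simpa using this

end OrthonormalBasis

theorem weyl_inequality_of_mem_span {𝕜 E ι₁ ι₂ ι₃ : Type*} [RCLike 𝕜] [NormedAddCommGroup E]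
    [InnerProductSpace 𝕜 E] [Fintype ι₁] [Fintype ι₂] [Fintype ι₃] {A B : E →ₗ[𝕜] E}
    {bA : OrthonormalBasis ι₁ 𝕜 E} {bB : OrthonormalBasis ι₂ 𝕜 E}
    {bC : OrthonormalBasis ι₃ 𝕜 E} {dA : ι₁ → ℝ} {dB : ι₂ → ℝ} {dC : ι₃ → ℝ}
    (hA : ∀ l, A (bA l) = (dA l : 𝕜) • bA l) (hB : ∀ l, B (bB l) = (dB l : 𝕜) • bB l)
    (hC : ∀ l, (A + B) (bC l) = (dC l : 𝕜) • bC l) {a b c : ℝ} {x : E}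
    (hxA : x ∈ span 𝕜 (bA '' {l | dA l ≤ a})) (hxB : x ∈ span 𝕜 (bB '' {l | dB l ≤ b}))
    (hxC : x ∈ span 𝕜 (bC '' {l | c ≤ dC l})) (hx : ‖x‖ = 1) :
    c ≤ a + b ∧
      (c = a + b → A x = (a : 𝕜) • x ∧ B x = (b : 𝕜) • x ∧ (A + B) x = (c : 𝕜) • x) := by
  have hsplit : RCLike.re ⟪x, (A + B) x⟫_𝕜 = RCLike.re ⟪x, A x⟫_𝕜 + RCLike.re ⟪x, B x⟫_𝕜 := by
    simp [inner_add_right]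
  have hleA := bA.re_inner_apply_le_of_mem_span hA hxA
  have hleB := bB.re_inner_apply_le_of_mem_span hB hxB
  have hgeC := bC.le_re_inner_apply_of_mem_span hC hxC
  simp only [hx, one_pow, mul_one] at hleA hleB hgeC
  refine ⟨by linarith, fun h => ⟨?_, ?_, ?_⟩⟩
  · exact bA.apply_eq_smul_of_mem_span_le hA hxA (by rw [hx]; linarith)
  · exact bB.apply_eq_smul_of_mem_span_le hB hxB (by rw [hx]; linarith)
  · exact bC.apply_eq_smul_of_mem_span_ge hC hxC (by rw [hx]; linarith)

namespace Matrix

variable {𝕜 n : Type*} [RCLike 𝕜] [Fintype n] [DecidableEq n]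

theorem IsHermitian.toEuclideanLin_eigenvectorBasis {M : Matrix n n 𝕜} (hM : M.IsHermitian)
    (l : n) :
    toEuclideanLin M (hM.eigenvectorBasis l) = (hM.eigenvalues l : 𝕜) • hM.eigenvectorBasis l := by
  rw [toLpLin_apply, hM.mulVec_eigenvectorBasis l, RCLike.real_smul_eq_coe_smul (K := 𝕜)]
  rfl

theorem toEuclideanLin_apply_eq_smul_iff {M : Matrix n n 𝕜} {x : EuclideanSpace 𝕜 n} {c : 𝕜} :
    toEuclideanLin M x = c • x ↔ M *ᵥ x.ofLp = c • x.ofLp := by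
  rw [toLpLin_apply, ← (WithLp.ofLp_injective 2).eq_iff]
  rfl

end Matrix

theorem Matrix.eq_add_of_mulVec_eq_smul {K n : Type*} [Field K] [Fintype n] {A B : Matrix n n K}
    {v : n → K} (hv : v ≠ 0) {a b c : K} (hA : A *ᵥ v = a • v) (hB : B *ᵥ v = b • v)
    (hC : (A + B) *ᵥ v = c • v) : c = a + b :=
  smul_left_injective K hv <| by simp only [← hC, add_mulVec, hA, hB, add_smul]

section muH

variable {n : ℕ} {A : Matrix (Fin n) (Fin n) ℂ} (hA : A.IsHermitian) {k : ℕ}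

theorem muH_eq_eigenvalues_sort (hk1 : 1 ≤ k) (hkn : k ≤ n) :
    muH hA k = hA.eigenvalues (Tuple.sort hA.eigenvalues ⟨k - 1, by omega⟩) := by
  rw [muH, Tuple.sort_univ_map_eq_ofFn, List.getD_eq_getElem _ _ (by simp; omega),
    List.getElem_ofFn]
  rfl

theorem le_finrank_span_eigenvalues_le_muH (hk1 : 1 ≤ k) (hkn : k ≤ n) :
    k ≤ finrank ℂ (span ℂ (hA.eigenvectorBasis '' {l | hA.eigenvalues l ≤ muH hA k})) := by
  have := Tuple.le_card_filter_le_apply_sort hA.eigenvalues ⟨k - 1, by omega⟩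
  rw [OrthonormalBasis.finrank_span_image, Fintype.card_subtype,
    muH_eq_eigenvalues_sort hA hk1 hkn]
  simp only [Set.mem_ofPred_eq] at this ⊢
  omega

theorem le_finrank_span_muH_le_eigenvalues (hk1 : 1 ≤ k) (hkn : k ≤ n) :
    n + 1 - k ≤
      finrank ℂ (span ℂ (hA.eigenvectorBasis '' {l | muH hA k ≤ hA.eigenvalues l})) := by
  have := Tuple.le_card_filter_apply_sort_le hA.eigenvalues ⟨k - 1, by omega⟩
  rw [OrthonormalBasis.finrank_span_image, Fintype.card_subtype,
    muH_eq_eigenvalues_sort hA hk1 hkn]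
  simp only [Set.mem_ofPred_eq] at this ⊢
  omega

end muH

/-- Weyl's inequality `μ_{i+j-n}(A+B) ≤ μ_i(A) + μ_j(B)` for Hermitian `A`, `B`,
with equality iff there is a common unit eigenvector for the three eigenvalues involved. -/
theorem hermitian_weyl_inequality {n : ℕ} (A B : Matrix (Fin n) (Fin n) ℂ)
    (hA : A.IsHermitian) (hB : B.IsHermitian)
    (i j : ℕ) (hi1 : 1 ≤ i) (hin : i ≤ n) (hj1 : 1 ≤ j) (hjn : j ≤ n)
    (h1 : 1 ≤ i + j - n) (h2 : i + j - n ≤ n) :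
    muH (hA.add hB) (i + j - n) ≤ muH hA i + muH hB j ∧
      (muH (hA.add hB) (i + j - n) = muH hA i + muH hB j ↔
        ∃ x : Fin n → ℂ, (∑ w, ‖x w‖ ^ 2 = 1) ∧
          A.mulVec x = (muH hA i : ℂ) • x ∧
          B.mulVec x = (muH hB j : ℂ) • x ∧
          (A + B).mulVec x = (muH (hA.add hB) (i + j - n) : ℂ) • x) := by
  set C := hA.add hB
  have hdim : 2 * finrank ℂ (EuclideanSpace ℂ (Fin n)) <
      finrank ℂ (span ℂ (hA.eigenvectorBasis '' {l | hA.eigenvalues l ≤ muH hA i})) +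
      finrank ℂ (span ℂ (hB.eigenvectorBasis '' {l | hB.eigenvalues l ≤ muH hB j})) +
      finrank ℂ (span ℂ (C.eigenvectorBasis '' {l | muH C (i + j - n) ≤ C.eigenvalues l})) := by
    have := le_finrank_span_eigenvalues_le_muH hA hi1 hin
    have := le_finrank_span_eigenvalues_le_muH hB hj1 hjn
    have := le_finrank_span_muH_le_eigenvalues C h1 h2
    rw [finrank_euclideanSpace_fin]
    omega
  obtain ⟨x, ⟨⟨hxA, hxB⟩, hxC⟩, hx⟩ :=
    exists_norm_eq_one_mem (inf_inf_ne_bot_of_lt_finrank_add _ _ _ hdim)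
  obtain ⟨hle, heigen⟩ := weyl_inequality_of_mem_span hA.toEuclideanLin_eigenvectorBasis
    hB.toEuclideanLin_eigenvectorBasis (by simpa using C.toEuclideanLin_eigenvectorBasis)
    hxA hxB hxC hx
  refine ⟨hle, fun heq => ?_, fun ⟨v, hv, hvA, hvB, hvC⟩ => ?_⟩
  · obtain ⟨hxA', hxB', hxC'⟩ := heigen heq
    exact ⟨x.ofLp, by simpa [hx] using (EuclideanSpace.norm_sq_eq x).symm,
      toEuclideanLin_apply_eq_smul_iff.1 hxA', toEuclideanLin_apply_eq_smul_iff.1 hxB',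
      toEuclideanLin_apply_eq_smul_iff.1 (by simpa using hxC')⟩
  · have hv0 : v ≠ 0 := by rintro rfl; simp at hv
    exact_mod_cast eq_add_of_mulVec_eq_smul hv0 hvA hvB hvC
end

section
/- Let G be obtained by joining a vertex u of a graph G₁ to a vertex v of a graph G₂ by a new edge. Then the Laplacian characteristic polynomials satisfy φ(G) = φ(G₁)φ(G₂) - φ(G₁)φ(L_v(G₂)) - φ(G₂)φ(L_u(G₁)). -/
open SimpleGraph Matrix Polynomial


section aux
variable {R : Type} [CommRing R]
set_option linter.unusedSectionVars false

lemma auxDetMinor {V : Type} [Fintype V] [DecidableEq V] (A : Matrix V V R) (u : V)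
    (h : A u = Pi.single u 1) :
    A.det = (A.submatrix (fun w : {w : V // w ≠ u} => (w : V))
      (fun w : {w : V // w ≠ u} => (w : V))).det := by
  classical
  let e : {w : V // w ≠ u} ⊕ Unit ≃ V :=
    { toFun := Sum.elim Subtype.val (fun _ => u)
      invFun := fun w => if h : w = u then Sum.inr () else Sum.inl ⟨w, h⟩
      left_inv := by
        rintro (⟨w, hw⟩ | ⟨⟩)
        · simp [hw]
        · simp
      right_inv := by intro w; by_cases hw : w = u <;> simp [hw] }
  rw [← Matrix.det_submatrix_equiv_self e A]
  have : A.submatrix e e = Matrix.fromBlocks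
      (A.submatrix (fun w : {w : V // w ≠ u} => (w : V)) (fun w : {w : V // w ≠ u} => (w : V)))
      (Matrix.of fun i (_ : Unit) => A (i : V) u) 0 1 := by
    ext (i | i) (j | j)
    · simp [e, Matrix.fromBlocks]
    · simp [e, Matrix.fromBlocks]
    · simp [e, Matrix.fromBlocks, h, Pi.single_apply, Ne.symm j.prop]
    · simp [e, Matrix.fromBlocks, h, Pi.single_apply]
  rw [this, Matrix.det_fromBlocks_zero₂₁]
  simp

lemma auxCharmatrixSubmatrix {V W : Type} [Fintype V] [DecidableEq V] [Fintype W] [DecidableEq W]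
    (A : Matrix V V R) (f : W → V) (hf : Function.Injective f) :
    charmatrix (A.submatrix f f) = (charmatrix A).submatrix f f := by
  refine Matrix.ext fun i j => ?_
  by_cases hij : i = j
  · subst hij; simp [charmatrix_apply_eq]
  · simp [charmatrix_apply_ne _ _ _ hij, charmatrix_apply_ne _ _ _ (fun h => hij (hf h))]

lemma auxUpdateRowFromBlocksInl {l m : Type} [DecidableEq l] [DecidableEq m]
    (A : Matrix l l R) (B : Matrix l m R) (C : Matrix m l R) (D : Matrix m m R)
    (i : l) (r : l ⊕ m → R) :
    (Matrix.fromBlocks A B C D).updateRow (Sum.inl i) r =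
      Matrix.fromBlocks (A.updateRow i (r ∘ Sum.inl)) (B.updateRow i (r ∘ Sum.inr)) C D := by
  ext (x | x) (y | y) <;> simp [Matrix.updateRow_apply, Sum.inl.injEq]

lemma auxUpdateRowFromBlocksInr {l m : Type} [DecidableEq l] [DecidableEq m]
    (A : Matrix l l R) (B : Matrix l m R) (C : Matrix m l R) (D : Matrix m m R)
    (i : m) (r : l ⊕ m → R) :
    (Matrix.fromBlocks A B C D).updateRow (Sum.inr i) r =
      Matrix.fromBlocks A B (C.updateRow i (r ∘ Sum.inl)) (D.updateRow i (r ∘ Sum.inr)) := by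
  ext (x | x) (y | y) <;> simp [Matrix.updateRow_apply, Sum.inr.injEq]

lemma auxUpdateRowComm {n : Type} [DecidableEq n] (M : Matrix n n R) {i j : n} (hij : i ≠ j)
    (r s : n → R) :
    (M.updateRow i r).updateRow j s = (M.updateRow j s).updateRow i r := by
  ext x y
  rcases eq_or_ne x i with rfl | hxi
  · simp [Matrix.updateRow_apply, hij]
  · rcases eq_or_ne x j with rfl | hxj
    · simp [Matrix.updateRow_apply, hxi, Ne.symm hij]
    · simp [Matrix.updateRow_apply, hxi, hxj]

end aux


/-- `φ(G)`: the characteristic polynomial of the Laplacian matrix of `G`. -/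
noncomputable def phi {V : Type} [Fintype V] [DecidableEq V] (G : SimpleGraph V) :
    Polynomial ℝ :=
  (lapR G).charpoly

/-- `φ(L_v(G))`: the characteristic polynomial of the principal submatrix of the Laplacian
of `G` obtained by deleting the row and column of the vertex `v`. -/
noncomputable def phiDel {V : Type} [Fintype V] [DecidableEq V] (G : SimpleGraph V) (v : V) :
    Polynomial ℝ :=
  ((lapR G).submatrix (fun w : {w : V // w ≠ v} => (w : V))
    (fun w : {w : V // w ≠ v} => (w : V))).charpoly

/-- The graph obtained by joining the vertex `u` of `G₁` to the vertex `v` of `G₂`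
by a new edge. -/
def joinByEdge {V₁ V₂ : Type} (G₁ : SimpleGraph V₁) (G₂ : SimpleGraph V₂) (u : V₁) (v : V₂) :
    SimpleGraph (V₁ ⊕ V₂) :=
  SimpleGraph.fromRel (fun a b =>
    (∃ x y : V₁, a = Sum.inl x ∧ b = Sum.inl y ∧ G₁.Adj x y) ∨
    (∃ x y : V₂, a = Sum.inr x ∧ b = Sum.inr y ∧ G₂.Adj x y) ∨
    (a = Sum.inl u ∧ b = Sum.inr v))


section join
variable {V₁ V₂ : Type} (G₁ : SimpleGraph V₁) (G₂ : SimpleGraph V₂) (u : V₁) (v : V₂)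

lemma aux_adj_inl_inl (a b : V₁) :
    (joinByEdge G₁ G₂ u v).Adj (Sum.inl a) (Sum.inl b) ↔ G₁.Adj a b := by
  constructor
  · rintro ⟨hne, (h | h)⟩ <;>
      rcases h with ⟨x, y, hx, hy, hadj⟩ | ⟨x, y, hx, hy, hadj⟩ | ⟨hx, hy⟩ <;>
      first
        | (cases hx; cases hy; first | exact hadj | exact hadj.symm)
        | simp_all
  · intro h
    exact ⟨by simpa using h.ne, Or.inl (Or.inl ⟨a, b, rfl, rfl, h⟩)⟩

lemma aux_adj_inr_inr (a b : V₂) :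
    (joinByEdge G₁ G₂ u v).Adj (Sum.inr a) (Sum.inr b) ↔ G₂.Adj a b := by
  constructor
  · rintro ⟨hne, (h | h)⟩ <;>
      rcases h with ⟨x, y, hx, hy, hadj⟩ | ⟨x, y, hx, hy, hadj⟩ | ⟨hx, hy⟩ <;>
      first
        | (cases hx; cases hy; first | exact hadj | exact hadj.symm)
        | simp_all
  · intro h
    exact ⟨by simpa using h.ne, Or.inl (Or.inr (Or.inl ⟨a, b, rfl, rfl, h⟩))⟩

lemma aux_adj_inl_inr (a : V₁) (b : V₂) :
    (joinByEdge G₁ G₂ u v).Adj (Sum.inl a) (Sum.inr b) ↔ a = u ∧ b = v := by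
  constructor
  · rintro ⟨hne, (h | h)⟩ <;>
      rcases h with ⟨x, y, hx, hy, hadj⟩ | ⟨x, y, hx, hy, hadj⟩ | ⟨hx, hy⟩ <;> simp_all
  · rintro ⟨rfl, rfl⟩
    exact ⟨by simp, Or.inl (Or.inr (Or.inr ⟨rfl, rfl⟩))⟩

lemma aux_adj_inr_inl (a : V₂) (b : V₁) :
    (joinByEdge G₁ G₂ u v).Adj (Sum.inr a) (Sum.inl b) ↔ b = u ∧ a = v := by
  rw [SimpleGraph.adj_comm, aux_adj_inl_inr]

lemma aux_degree_eq_sum {V : Type} [Fintype V] [DecidableEq V] (G : SimpleGraph V)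
    [DecidableRel G.Adj] (a : V) :
    G.degree a = ∑ b, if G.Adj a b then 1 else 0 := by
  rw [← SimpleGraph.card_neighborFinset_eq_degree, SimpleGraph.neighborFinset_eq_filter,
    Finset.card_filter]

variable [Fintype V₁] [DecidableEq V₁] [Fintype V₂] [DecidableEq V₂]

lemma aux_degree_inl [DecidableRel (joinByEdge G₁ G₂ u v).Adj] [DecidableRel G₁.Adj] (a : V₁) :
    (joinByEdge G₁ G₂ u v).degree (Sum.inl a) = G₁.degree a + if a = u then 1 else 0 := by
  rw [aux_degree_eq_sum, aux_degree_eq_sum, Fintype.sum_sum_type]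
  simp [aux_adj_inl_inl, aux_adj_inl_inr, ite_and, Finset.sum_ite_eq']

lemma aux_degree_inr [DecidableRel (joinByEdge G₁ G₂ u v).Adj] [DecidableRel G₂.Adj] (b : V₂) :
    (joinByEdge G₁ G₂ u v).degree (Sum.inr b) = G₂.degree b + if b = v then 1 else 0 := by
  rw [aux_degree_eq_sum, aux_degree_eq_sum, Fintype.sum_sum_type]
  simp [aux_adj_inr_inr, aux_adj_inr_inl, ite_and, Finset.sum_ite_eq', add_comm]

/-- The rank-one perturbation vector. -/
def wVec {V₁ V₂ : Type} [DecidableEq V₁] [DecidableEq V₂] (u : V₁) (v : V₂) : V₁ ⊕ V₂ → ℝ :=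
  Sum.elim (fun a => if a = u then 1 else 0) (fun b => if b = v then -1 else 0)

lemma aux_lapR_eq {V : Type} [Fintype V] [DecidableEq V] (G : SimpleGraph V)
    [inst : DecidableRel G.Adj] : lapR G = G.lapMatrix ℝ := by
  have h : inst = Classical.decRel G.Adj := Subsingleton.elim _ _
  unfold lapR
  rw [h]

lemma aux_lapR_join :
    lapR (joinByEdge G₁ G₂ u v) =
      Matrix.fromBlocks (lapR G₁) 0 0 (lapR G₂) +
        Matrix.of (fun i j => wVec u v i * wVec u v j) := by
  classical
  rw [aux_lapR_eq, aux_lapR_eq, aux_lapR_eq]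
  ext i j
  rcases i with a | a <;> rcases j with b | b
  · simp only [SimpleGraph.lapMatrix, SimpleGraph.degMatrix, Matrix.sub_apply,
      Matrix.diagonal_apply, SimpleGraph.adjMatrix_apply, Matrix.add_apply,
      Matrix.fromBlocks_apply₁₁, Matrix.of_apply, wVec, Sum.elim_inl, Sum.inl.injEq,
      aux_adj_inl_inl, aux_degree_inl]
    rcases eq_or_ne a b with rfl | hab
    · push_cast
      split_ifs <;> first | ring1 | simp_all
    · simp only [hab, if_false]
      split_ifs <;> simp_all
  · simp only [SimpleGraph.lapMatrix, SimpleGraph.degMatrix, Matrix.sub_apply,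
      Matrix.diagonal_apply, SimpleGraph.adjMatrix_apply, Matrix.add_apply,
      Matrix.fromBlocks_apply₁₂, Matrix.of_apply, wVec, Sum.elim_inl, Sum.elim_inr,
      aux_adj_inl_inr, Matrix.zero_apply]
    split_ifs <;> simp_all
  · simp only [SimpleGraph.lapMatrix, SimpleGraph.degMatrix, Matrix.sub_apply,
      Matrix.diagonal_apply, SimpleGraph.adjMatrix_apply, Matrix.add_apply,
      Matrix.fromBlocks_apply₂₁, Matrix.of_apply, wVec, Sum.elim_inl, Sum.elim_inr,
      aux_adj_inr_inl, Matrix.zero_apply]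
    split_ifs <;> simp_all
  · simp only [SimpleGraph.lapMatrix, SimpleGraph.degMatrix, Matrix.sub_apply,
      Matrix.diagonal_apply, SimpleGraph.adjMatrix_apply, Matrix.add_apply,
      Matrix.fromBlocks_apply₂₂, Matrix.of_apply, wVec, Sum.elim_inr, Sum.inr.injEq,
      aux_adj_inr_inr, aux_degree_inr]
    rcases eq_or_ne a b with rfl | hab
    · push_cast
      split_ifs <;> first | ring1 | simp_all
    · simp only [hab, if_false]
      split_ifs <;> simp_all

end join

/-- `φ(G) = φ(G₁)φ(G₂) - φ(G₁)φ(L_v(G₂)) - φ(G₂)φ(L_u(G₁))` for the graph `G` obtained by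
joining the vertex `u` of `G₁` to the vertex `v` of `G₂` by an edge. -/

theorem charpoly_join_by_edge {V₁ V₂ : Type} [Fintype V₁] [DecidableEq V₁]
    [Fintype V₂] [DecidableEq V₂] (G₁ : SimpleGraph V₁) (G₂ : SimpleGraph V₂)
    (u : V₁) (v : V₂) :
    phi (joinByEdge G₁ G₂ u v) =
      phi G₁ * phi G₂ - phi G₁ * phiDel G₂ v - phi G₂ * phiDel G₁ u := by
  classical
  set A := charmatrix (lapR G₁) with hA
  set B := charmatrix (lapR G₂) with hB
  set M : Matrix (V₁ ⊕ V₂) (V₁ ⊕ V₂) (Polynomial ℝ) := Matrix.fromBlocks A 0 0 B with hM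
  set u' : V₁ ⊕ V₂ := Sum.inl u with hu'
  set v' : V₁ ⊕ V₂ := Sum.inr v with hv'
  have huv : u' ≠ v' := by simp [hu', hv']
  set w : V₁ ⊕ V₂ → Polynomial ℝ := fun i => Polynomial.C (wVec u v i) with hw
  have hwu : w u' = 1 := by simp [hw, hu', wVec]
  have hwv : w v' = -1 := by simp [hw, hv', wVec]
  have hwsingle : w = Pi.single u' 1 - Pi.single v' 1 := by
    funext i
    rcases i with a | a <;>
      simp only [hw, wVec, Sum.elim_inl, Sum.elim_inr, Pi.sub_apply, Pi.single_apply,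
        hu', hv', apply_ite Polynomial.C, Polynomial.C_1, Polynomial.C_0, Polynomial.C_neg] <;>
      split_ifs <;> simp_all
  -- phiDel as minors of charmatrices
  have hphiDel₁ : phiDel G₁ u = (A.submatrix (fun x : {x : V₁ // x ≠ u} => (x : V₁))
      (fun x : {x : V₁ // x ≠ u} => (x : V₁))).det := by
    rw [phiDel, Matrix.charpoly, auxCharmatrixSubmatrix _ _ Subtype.coe_injective, hA]
  have hphiDel₂ : phiDel G₂ v = (B.submatrix (fun x : {x : V₂ // x ≠ v} => (x : V₂))
      (fun x : {x : V₂ // x ≠ v} => (x : V₂))).det := by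
    rw [phiDel, Matrix.charpoly, auxCharmatrixSubmatrix _ _ Subtype.coe_injective, hB]
  -- the charmatrix of the join
  have expand : ∀ {n : Type} [Fintype n] [DecidableEq n] (S T : Matrix n n ℝ),
      charmatrix (S + T) = charmatrix S - T.map Polynomial.C := by
    intro n _ _ S T
    simp only [charmatrix, map_add, RingHom.mapMatrix_apply]
    rw [sub_add_eq_sub_sub]
  have hchar : charmatrix (lapR (joinByEdge G₁ G₂ u v)) =
      M - Matrix.of (fun i j => w i * w j) := by
    rw [aux_lapR_join G₁ G₂ u v, expand, charmatrix_fromBlocks,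
      Matrix.map_zero _ Polynomial.C_0]
    rw [hM, hA, hB]
    congr 1
    · simp
    · ext i j
      simp [hw, _root_.map_mul]
  have h1 : phi (joinByEdge G₁ G₂ u v) = (M - Matrix.of fun i j => w i * w j).det := by
    rw [phi, Matrix.charpoly, hchar]
  -- rewrite as two row updates
  set M₁ := M.updateRow u' (M u' + (-(w u')) • w) with hM₁
  have hN : M - Matrix.of (fun i j => w i * w j) =
      M₁.updateRow v' (M v' + (-(w v')) • w) := by
    ext i j
    by_cases hiv : i = v'
    · subst hiv
      simp [hM₁, Matrix.updateRow_apply, mul_comm, sub_eq_add_neg]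
    · by_cases hiu : i = u'
      · subst hiu
        simp [hM₁, Matrix.updateRow_apply, hiv, mul_comm, sub_eq_add_neg]
      · have hwi : w i = 0 := by
          rw [hwsingle]; simp [Pi.single_apply, hiu, hiv]
        simp [hM₁, Matrix.updateRow_apply, hiu, hiv, hwi]
  have hM₁v : M₁ v' = M v' := by rw [hM₁]; exact Matrix.updateRow_ne (Ne.symm huv)
  have detM₁ : M₁.det = M.det + (-(w u')) * (M.updateRow u' w).det := by
    rw [hM₁, Matrix.det_updateRow_add, Matrix.det_updateRow_smul, Matrix.updateRow_eq_self]
  have hrows : ((M.updateRow v' w).updateRow u' w).det = 0 :=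
    Matrix.det_zero_of_row_eq huv
      (by rw [Matrix.updateRow_self, Matrix.updateRow_ne (Ne.symm huv), Matrix.updateRow_self])
  have detM₁v : (M₁.updateRow v' w).det = (M.updateRow v' w).det := by
    rw [hM₁, auxUpdateRowComm _ huv,
      show M u' = (M.updateRow v' w) u' from (Matrix.updateRow_ne huv).symm,
      Matrix.det_updateRow_add, Matrix.det_updateRow_smul, Matrix.updateRow_eq_self, hrows,
      mul_zero, add_zero]
  have hdetN : (M - Matrix.of fun i j => w i * w j).det =
      M.det - w u' * (M.updateRow u' w).det - w v' * (M.updateRow v' w).det := by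
    rw [hN, show M v' = M₁ v' from hM₁v.symm, Matrix.det_updateRow_add,
      Matrix.det_updateRow_smul, Matrix.updateRow_eq_self, detM₁, detM₁v]
    ring
  -- block determinant computations
  have c3 : ∀ {l m : Type} [DecidableEq l] (i : l),
      (0 : Matrix l m (Polynomial ℝ)).updateRow i 0 = 0 := by
    intro l m _ i
    ext x y
    simp [Matrix.updateRow_apply]
  have cl1 : (Pi.single u' 1 : V₁ ⊕ V₂ → Polynomial ℝ) ∘ Sum.inl = Pi.single u 1 := by
    funext a; simp [Pi.single_apply, hu']
  have cl2 : (Pi.single u' 1 : V₁ ⊕ V₂ → Polynomial ℝ) ∘ Sum.inr = 0 := by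
    funext a; simp [Pi.single_apply, hu']
  have cl3 : (Pi.single v' 1 : V₁ ⊕ V₂ → Polynomial ℝ) ∘ Sum.inl = 0 := by
    funext a; simp [Pi.single_apply, hv']
  have cl4 : (Pi.single v' 1 : V₁ ⊕ V₂ → Polynomial ℝ) ∘ Sum.inr = Pi.single v 1 := by
    funext a; simp [Pi.single_apply, hv']
  have e1 : (M.updateRow u' (Pi.single u' 1)).det =
      (A.updateRow u (Pi.single u 1)).det * B.det := by
    rw [hM, hu', auxUpdateRowFromBlocksInl, cl1, cl2, c3, Matrix.det_fromBlocks_zero₂₁]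
  have e2 : (M.updateRow u' (Pi.single v' 1)).det = 0 := by
    rw [hM, hu', auxUpdateRowFromBlocksInl, cl3, Matrix.det_fromBlocks_zero₂₁]
    rw [Matrix.det_eq_zero_of_row_eq_zero u (by simp), zero_mul]
  have e3 : (M.updateRow v' (Pi.single v' 1)).det =
      A.det * (B.updateRow v (Pi.single v 1)).det := by
    rw [hM, hv', auxUpdateRowFromBlocksInr, cl3, cl4, c3, Matrix.det_fromBlocks_zero₂₁]
  have e4 : (M.updateRow v' (Pi.single u' 1)).det = 0 := by
    rw [hM, hv', auxUpdateRowFromBlocksInr, cl2, Matrix.det_fromBlocks_zero₁₂]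
    rw [Matrix.det_eq_zero_of_row_eq_zero v (by simp), mul_zero]
  have hsingle_smul : (Pi.single u' 1 - Pi.single v' 1 : V₁ ⊕ V₂ → Polynomial ℝ) =
      (Pi.single u' 1 : V₁ ⊕ V₂ → Polynomial ℝ) +
        (-1 : Polynomial ℝ) • (Pi.single v' 1 : V₁ ⊕ V₂ → Polynomial ℝ) := by
    rw [neg_one_smul, ← sub_eq_add_neg]
  have f1 : (M.updateRow u' w).det = (A.updateRow u (Pi.single u 1)).det * B.det := by
    rw [hwsingle, hsingle_smul, Matrix.det_updateRow_add, Matrix.det_updateRow_smul, e1, e2]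
    ring
  have f2 : (M.updateRow v' w).det = -(A.det * (B.updateRow v (Pi.single v 1)).det) := by
    rw [hwsingle, hsingle_smul, Matrix.det_updateRow_add, Matrix.det_updateRow_smul, e3, e4]
    ring
  -- identify minors with phiDel
  have g1 : (A.updateRow u (Pi.single u 1)).det = phiDel G₁ u := by
    rw [hphiDel₁, auxDetMinor (A.updateRow u (Pi.single u 1)) u Matrix.updateRow_self]
    congr 1
    ext i j
    rw [Matrix.submatrix_apply, Matrix.updateRow_ne i.prop, Matrix.submatrix_apply]
  have g2 : (B.updateRow v (Pi.single v 1)).det = phiDel G₂ v := by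
    rw [hphiDel₂, auxDetMinor (B.updateRow v (Pi.single v 1)) v Matrix.updateRow_self]
    congr 1
    ext i j
    rw [Matrix.submatrix_apply, Matrix.updateRow_ne i.prop, Matrix.submatrix_apply]
  have hdetM : M.det = phi G₁ * phi G₂ := by
    rw [hM, Matrix.det_fromBlocks_zero₂₁, phi, phi, Matrix.charpoly, Matrix.charpoly, hA, hB]
  have hAdet : A.det = phi G₁ := by rw [phi, Matrix.charpoly, hA]
  have hBdet : B.det = phi G₂ := by rw [phi, Matrix.charpoly, hB]
  rw [h1, hdetN, hdetM, f1, f2, g1, g2, hwu, hwv, hAdet, hBdet]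
  ring
end

section
/- Let C_{n,r} be the lollipop graph with girth r ≡ 1 (mod 6) and n ≡ 0 (mod 3). Then 1 is a Laplacian eigenvalue of C_{n,r} with multiplicity exactly 1. -/
open SimpleGraph Matrix Polynomial

/-- The lollipop graph `C_{n,r}` on vertices `0, …, n-1`: the path `0-1-⋯-(n-1)` together
with the extra edge joining `0` and `r-1`, so that `0, 1, …, r-1` form a cycle of length `r`
with a pendant path on `n - r` vertices attached at the cycle vertex `r-1`. -/
def lollipop (n r : ℕ) : SimpleGraph (Fin n) :=
  SimpleGraph.fromRel (fun i j => (i : ℕ) + 1 = (j : ℕ) ∨ ((i : ℕ) = 0 ∧ (j : ℕ) = r - 1))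

/-!
A vector `x` with `L x = x` satisfies `x (k + 2) = x (k + 1) - x k` at every vertex `k + 1` of
degree `2`, so along the path `0, 1, …, n - 1` it is determined by `x 0` and `x 1`:
`x k = x 0 * hexSeq k - x 1 * hexSeq (k + 1)` with `hexSeq = 1, 0, -1, -1, 0, 1, …` of period `6`.
Since `r ≡ 1 (mod 6)` gives `hexSeq (r - 1) = 1` and `hexSeq r = 0`, the extra edge at the
junction `r - 1` does not break this formula, while the equation at vertex `0` forces `x 1 = 0`.
So the `1`-eigenspace is at most the line of `hexSeq`, and `hexSeq` is an eigenvector because the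
equation at the pendant vertex asks for `hexSeq (n - 2) = 0`, i.e. `3 ∣ n`. For a Hermitian matrix
algebraic and geometric multiplicities agree, so `m(1) = 1`.
-/

open Module

namespace Matrix.IsHermitian

variable {𝕜 n : Type*} [RCLike 𝕜] [Fintype n] [DecidableEq n] {A : Matrix n n 𝕜}

lemma count_zero_roots_charpoly (hA : A.IsHermitian) :
    A.charpoly.roots.count 0 = finrank 𝕜 (LinearMap.ker A.mulVecLin) := by
  have hroots : A.charpoly.roots.count 0 = Fintype.card {i // hA.eigenvalues i = 0} := by
    rw [hA.roots_charpoly_eq_eigenvalues, Multiset.count_map, Fintype.card_subtype]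
    simp only [Function.comp, eq_comm (a := (0 : 𝕜)), RCLike.ofReal_eq_zero]
    rfl
  have hnullity := LinearMap.finrank_range_add_finrank_ker A.mulVecLin
  rw [finrank_fintype_fun_eq_card, ← Matrix.rank, hA.rank_eq_card_non_zero_eigs,
    Fintype.card_subtype_compl] at hnullity
  have := Fintype.card_subtype_le (fun i => hA.eigenvalues i = 0)
  omega

lemma count_roots_charpoly_eq_finrank_eigenspace (hA : A.IsHermitian) (μ : ℝ) :
    A.charpoly.roots.count (μ : 𝕜) = finrank 𝕜 (End.eigenspace (toLin' A) μ) := by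
  have hB : (A - scalar n (μ : 𝕜)).IsHermitian :=
    hA.sub (isHermitian_diagonal_of_self_adjoint _ (by ext; simp))
  have hscalar : toLin' (scalar n (μ : 𝕜)) = (μ : 𝕜) • 1 := by
    ext v i
    simp [scalar_apply, Pi.single_apply, RCLike.real_smul_eq_coe_mul]
  rw [count_roots, rootMultiplicity_eq_rootMultiplicity, ← charpoly_sub_scalar, ← count_roots,
    hB.count_zero_roots_charpoly, End.eigenspace_def, ← toLin'_apply', map_sub, hscalar]

end Matrix.IsHermitian

lemma lapMatrix_mulVec_apply_of_neighborFinset_eq {V : Type*} [Fintype V] [DecidableEq V]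
    {G : SimpleGraph V} [DecidableRel G.Adj] {v : V} {s : Finset V}
    (h : G.neighborFinset v = s) (x : V → ℝ) :
    (G.lapMatrix ℝ *ᵥ x) v = s.card * x v - ∑ u ∈ s, x u := by
  rw [lapMatrix_mulVec_apply, ← card_neighborFinset_eq_degree, h]

lemma lollipop_adj {n r : ℕ} {i j : Fin n} :
    (lollipop n r).Adj i j ↔ (i : ℕ) ≠ j ∧ ((i : ℕ) + 1 = j ∨ (j : ℕ) + 1 = i ∨
      ((i : ℕ) = 0 ∧ (j : ℕ) = r - 1) ∨ ((j : ℕ) = 0 ∧ (i : ℕ) = r - 1)) := by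
  simp only [lollipop, fromRel_adj, ne_eq, Fin.ext_iff]
  tauto

section LollipopLaplacian

variable {n r : ℕ} [DecidableRel (lollipop n r).Adj] (x : Fin n → ℝ)

lemma lollipop_lapMatrix_mulVec_zero (h3 : 3 ≤ r) (hrn : r ≤ n) :
    ((lollipop n r).lapMatrix ℝ *ᵥ x) ⟨0, by omega⟩ =
      2 * x ⟨0, by omega⟩ - (x ⟨1, by omega⟩ + x ⟨r - 1, by omega⟩) := by
  have hne : (⟨1, by omega⟩ : Fin n) ≠ ⟨r - 1, by omega⟩ := by simp [Fin.ext_iff]; omega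
  rw [lapMatrix_mulVec_apply_of_neighborFinset_eq (s := {⟨1, by omega⟩, ⟨r - 1, by omega⟩}),
    Finset.card_pair hne, Finset.sum_pair hne]
  · norm_num
  ext u
  have := u.isLt
  simp [lollipop_adj, Fin.ext_iff]
  omega

lemma lollipop_lapMatrix_mulVec_succ (k : ℕ) (hk : k + 2 < n) (hkr : k + 1 ≠ r - 1) :
    ((lollipop n r).lapMatrix ℝ *ᵥ x) ⟨k + 1, by omega⟩ =
      2 * x ⟨k + 1, by omega⟩ - (x ⟨k, by omega⟩ + x ⟨k + 2, hk⟩) := by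
  have hne : (⟨k, by omega⟩ : Fin n) ≠ ⟨k + 2, hk⟩ := by simp [Fin.ext_iff]
  rw [lapMatrix_mulVec_apply_of_neighborFinset_eq (s := {⟨k, by omega⟩, ⟨k + 2, hk⟩}),
    Finset.card_pair hne, Finset.sum_pair hne]
  · norm_num
  ext u
  have := u.isLt
  simp [lollipop_adj, Fin.ext_iff]
  omega

lemma lollipop_lapMatrix_mulVec_junction (h3 : 3 ≤ r) (k : ℕ) (hk : k + 2 < n)
    (hkr : k + 1 = r - 1) :
    ((lollipop n r).lapMatrix ℝ *ᵥ x) ⟨k + 1, by omega⟩ =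
      3 * x ⟨k + 1, by omega⟩ - (x ⟨k, by omega⟩ + x ⟨k + 2, hk⟩ + x ⟨0, by omega⟩) := by
  have hne₁ : (⟨k, by omega⟩ : Fin n) ∉ ({⟨k + 2, hk⟩, ⟨0, by omega⟩} : Finset (Fin n)) := by
    simp [Fin.ext_iff]; omega
  have hne₂ : (⟨k + 2, hk⟩ : Fin n) ≠ ⟨0, by omega⟩ := by simp [Fin.ext_iff]
  rw [lapMatrix_mulVec_apply_of_neighborFinset_eq
      (s := {⟨k, by omega⟩, ⟨k + 2, hk⟩, ⟨0, by omega⟩}),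
    Finset.card_insert_of_notMem hne₁, Finset.card_pair hne₂, Finset.sum_insert hne₁,
    Finset.sum_pair hne₂]
  · norm_num
    ring
  ext u
  have := u.isLt
  simp [lollipop_adj, Fin.ext_iff]
  omega

lemma lollipop_lapMatrix_mulVec_last (k : ℕ) (hk : k + 2 = n) (hkr : k + 1 ≠ r - 1) :
    ((lollipop n r).lapMatrix ℝ *ᵥ x) ⟨k + 1, by omega⟩ =
      x ⟨k + 1, by omega⟩ - x ⟨k, by omega⟩ := by
  rw [lapMatrix_mulVec_apply_of_neighborFinset_eq (s := {⟨k, by omega⟩}),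
    Finset.card_singleton, Finset.sum_singleton]
  · norm_num
  ext u
  have := u.isLt
  simp [lollipop_adj, Fin.ext_iff]
  omega

end LollipopLaplacian

def hexSeq : ℕ → ℝ
  | 0 => 1
  | 1 => 0
  | k + 2 => hexSeq (k + 1) - hexSeq k

lemma hexSeq_add_three (k : ℕ) : hexSeq (k + 3) = -hexSeq k := by
  simp only [hexSeq]
  ring

lemma hexSeq_periodic : Function.Periodic hexSeq 6 := fun k => by
  rw [show k + 6 = k + 3 + 3 by ring, hexSeq_add_three, hexSeq_add_three, neg_neg]

lemma hexSeq_eq_one_of_mod_six_eq_zero {k : ℕ} (hk : k % 6 = 0) : hexSeq k = 1 := by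
  rw [← hexSeq_periodic.map_mod_nat, hk]
  rfl

lemma hexSeq_eq_one_of_mod_six_eq_five {k : ℕ} (hk : k % 6 = 5) : hexSeq k = 1 := by
  rw [← hexSeq_periodic.map_mod_nat, hk]
  norm_num [hexSeq]

lemma hexSeq_three_mul_add_one (m : ℕ) : hexSeq (3 * m + 1) = 0 := by
  induction m with
  | zero => rfl
  | succ m ih => rw [show 3 * (m + 1) + 1 = 3 * m + 1 + 3 by ring, hexSeq_add_three, ih, neg_zero]

section LollipopEigenspace

variable {n r : ℕ} [DecidableRel (lollipop n r).Adj] (h3 : 3 ≤ r) (hr : r % 6 = 1) (hrn : r < n)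

include h3 hr hrn

lemma lollipop_lapMatrix_mulVec_hexSeq (hn : 3 ∣ n) :
    (lollipop n r).lapMatrix ℝ *ᵥ (fun i : Fin n => hexSeq i) =
      fun i : Fin n => hexSeq i := by
  ext ⟨k, hk⟩
  rcases k with _ | j
  · rw [lollipop_lapMatrix_mulVec_zero _ h3 hrn.le]
    norm_num [hexSeq_eq_one_of_mod_six_eq_zero (show (r - 1) % 6 = 0 by omega), hexSeq]
  by_cases hjn : j + 2 = n
  · obtain ⟨m, rfl⟩ : ∃ m, j = 3 * m + 1 := ⟨n / 3 - 1, by omega⟩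
    rw [lollipop_lapMatrix_mulVec_last _ _ hjn (by omega)]
    norm_num [hexSeq_three_mul_add_one]
  by_cases hjr : j + 1 = r - 1
  · rw [lollipop_lapMatrix_mulVec_junction _ h3 j (by omega) hjr]
    norm_num [hexSeq_eq_one_of_mod_six_eq_five (show j % 6 = 5 by omega),
      hexSeq_eq_one_of_mod_six_eq_zero (show (j + 1) % 6 = 0 by omega), hexSeq]
  · rw [lollipop_lapMatrix_mulVec_succ _ j (by omega) hjr]
    simp only [hexSeq]
    ring

lemma lollipop_apply_eq_of_lapMatrix_mulVec_eq_self {x : Fin n → ℝ}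
    (hx : (lollipop n r).lapMatrix ℝ *ᵥ x = x) (k : ℕ) (hk : k < n) :
    x ⟨k, hk⟩ = x ⟨0, by omega⟩ * hexSeq k - x ⟨1, by omega⟩ * hexSeq (k + 1) := by
  induction k using Nat.twoStepInduction with
  | zero => simp [hexSeq]
  | one => simp [hexSeq]
  | more k ih₀ ih₁ =>
    have h := congrFun hx ⟨k + 1, by omega⟩
    by_cases hkr : k + 1 = r - 1
    · rw [lollipop_lapMatrix_mulVec_junction _ h3 k hk hkr, ih₀, ih₁] at h
      simp only [hexSeq, hexSeq_eq_one_of_mod_six_eq_five (show k % 6 = 5 by omega),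
        hexSeq_eq_one_of_mod_six_eq_zero (show (k + 1) % 6 = 0 by omega)] at h ⊢
      linarith
    · rw [lollipop_lapMatrix_mulVec_succ _ k hk hkr, ih₀, ih₁] at h
      simp only [hexSeq] at h ⊢
      linarith

lemma lollipop_eigenspace_one_eq_span (hn : 3 ∣ n) :
    End.eigenspace (toLin' ((lollipop n r).lapMatrix ℝ)) 1 =
      Submodule.span ℝ {fun i : Fin n => hexSeq i} := by
  have hmem : ∀ x, x ∈ End.eigenspace (toLin' ((lollipop n r).lapMatrix ℝ)) 1 ↔
      (lollipop n r).lapMatrix ℝ *ᵥ x = x := by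
    simp
  refine le_antisymm (fun x hx => ?_) ?_
  · rw [hmem] at hx
    have hx₁ : x ⟨1, by omega⟩ = 0 := by
      have h₀ := congrFun hx ⟨0, by omega⟩
      have hjunction :=
        lollipop_apply_eq_of_lapMatrix_mulVec_eq_self h3 hr hrn hx (r - 1) (by omega)
      rw [lollipop_lapMatrix_mulVec_zero _ h3 hrn.le] at h₀
      rw [Nat.sub_add_cancel (by omega), ← hexSeq_periodic.map_mod_nat r, hr,
        hexSeq_eq_one_of_mod_six_eq_zero (show (r - 1) % 6 = 0 by omega)] at hjunction
      norm_num [hexSeq] at hjunction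
      linarith
    refine Submodule.mem_span_singleton.mpr ⟨x ⟨0, by omega⟩, funext fun ⟨k, hk⟩ => ?_⟩
    simp [lollipop_apply_eq_of_lapMatrix_mulVec_eq_self h3 hr hrn hx k hk, hx₁]
  · rw [Submodule.span_le, Set.singleton_subset_iff, SetLike.mem_coe, hmem]
    exact lollipop_lapMatrix_mulVec_hexSeq h3 hr hrn hn

end LollipopEigenspace

/-- If `r ≡ 1 (mod 6)` and `n ≡ 0 (mod 3)`, then `1` is a Laplacian eigenvalue of the
lollipop graph `C_{n,r}` with multiplicity exactly `1`. -/
theorem lollipop_eigenvalue_one_r_one_mod_six (n r : ℕ) (h3 : 3 ≤ r) (hrn : r ≤ n)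
    (hr : r % 6 = 1) (hn : 3 ∣ n) :
    (1 : ℝ) ∈ lapEigs (lollipop n r) ∧ mEig (lollipop n r) 1 = 1 := by
  let := Classical.decRel (lollipop n r).Adj
  have hrn' : r < n := by omega
  have hL : lapR (lollipop n r) = (lollipop n r).lapMatrix ℝ := rfl
  have hs : (fun i : Fin n => hexSeq i) ≠ 0 := fun h => by
    simpa [hexSeq] using congrFun h ⟨0, by omega⟩
  have hmult : mEig (lollipop n r) 1 = 1 := by
    have hherm := (posSemidef_lapMatrix ℝ (lollipop n r)).isHermitian
    have := hherm.count_roots_charpoly_eq_finrank_eigenspace 1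
    rw [RCLike.ofReal_one] at this
    rw [mEig, lapEigs, hL, this, lollipop_eigenspace_one_eq_span h3 hr hrn' hn,
      finrank_span_singleton hs]
  exact ⟨Multiset.count_pos.mp (hmult ▸ one_pos : 0 < mEig (lollipop n r) 1), hmult⟩
end
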